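/- The Tutte polynomial of a matroid M on a finite totally ordered ground set E satisfies T_M(x,y) = Σ_{X ∈ D(M,<)} x^{r(M/X)} y^{r*(M|X)}, where T_M(x,y) = Σ_{B basis of M} x^{|Int_M(B)|} y^{|Ext_M(B)|}. -/

import Mathlib

open Matroid Set
open scoped Classical

variable {α : Type*}

/-- A circuit of a matroid: a minimal dependent set. -/
def Circ (M : Matroid α) (C : Set α) : Prop := Minimal M.Dep C

/-- Contraction of a set `X` in a matroid `M`, defined via duality and restriction. -/
def mcon (M : Matroid α) (X : Set α) : Matroid α := (M✶ ↾ (M✶.E \ X))✶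

/-- The rank of a matroid: the (common) cardinality of its bases. -/
noncomputable def rkN (M : Matroid α) : ℕ := sSup (Set.ncard '' {B | M.IsBase B})

/-- The rank of a set `X` in a matroid `M`. -/
noncomputable def rset (M : Matroid α) (X : Set α) : ℕ := rkN (M ↾ X)

/-- `e` is the minimal element of the set `C`. -/
def IsMinOf [LinearOrder α] (e : α) (C : Set α) : Prop := e ∈ C ∧ ∀ f ∈ C, e ≤ f

/-- `e` is externally active in `M` with respect to `X`. -/
def ExtAct [LinearOrder α] (M : Matroid α) (X : Set α) (e : α) : Prop :=
  e ∈ M.E \ X ∧ ∃ C, Circ M C ∧ C ⊆ insert e X ∧ IsMinOf e C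

/-- `e` is internally active in `M'` with respect to `X`. -/
def IntAct [LinearOrder α] (M' : Matroid α) (X : Set α) (e : α) : Prop :=
  e ∈ X ∧ ∃ C, Circ (M'✶) C ∧ C ⊆ insert e (M'.E \ X) ∧ IsMinOf e C

/-- The set `Ext_M(X)` of externally active elements. -/
def ExtSet [LinearOrder α] (M : Matroid α) (X : Set α) : Set α := {e | ExtAct M X e}

/-- The set `Int_{M'}(X)` of internally active elements. -/
def IntSet [LinearOrder α] (M' : Matroid α) (X : Set α) : Set α := {e | IntAct M' X e}

/-- `Y` is `(M,<)`-compatible: no `M`-circuit `C` satisfies `Y ∩ C = {min C}`. -/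
def Compat [LinearOrder α] (M : Matroid α) (Y : Set α) : Prop :=
  ¬ ∃ C e, Circ M C ∧ IsMinOf e C ∧ Y ∩ C = {e}

/-- `(M, M')` is a matroid perspective: same ground set, and every circuit of `M`
is a union of circuits of `M'` (equivalently, every point of an `M`-circuit `C` lies in
an `M'`-circuit contained in `C`). -/
def Perspective (M M' : Matroid α) : Prop :=
  M.E = M'.E ∧ ∀ C, Circ M C → ∀ x ∈ C, ∃ C', Circ M' C' ∧ C' ⊆ C ∧ x ∈ C'

/-- `A` is lexicographically smaller than `B` (at the minimal element where they differ). -/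
def LexLT [LinearOrder α] (A B : Set α) : Prop :=
  ∃ e, e ∈ A ∧ e ∉ B ∧ ∀ f, f < e → (f ∈ A ↔ f ∈ B)

/-- `B` is the lexicographically minimal basis of `M`. -/
def MinBasis [LinearOrder α] (M : Matroid α) (B : Set α) : Prop :=
  M.IsBase B ∧ ∀ B', M.IsBase B' → ¬ LexLT B' B

/-- The collection `D(M, M', <)` of compatible sets of a matroid perspective. -/
def DSet [LinearOrder α] (M M' : Matroid α) : Set (Set α) :=
  {X | X ⊆ M.E ∧ Compat (M'✶) X ∧ Compat M (M.E \ X)}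

variable {M : Matroid α} {B B1 B2 C D Dd Db S X Y : Set α} {a e f f0 x y b c d : α}



lemma Circ.dep (h : Circ M C) : M.Dep C := h.prop
lemma Circ.subset_ground (h : Circ M C) : C ⊆ M.E := h.prop.subset_ground

lemma Circ.diff_indep (h : Circ M C) (hx : x ∈ C) : M.Indep (C \ {x}) := by
  by_contra hdep
  rw [not_indep_iff (diff_subset.trans h.subset_ground)] at hdep
  exact (h.2 hdep diff_subset hx).2 rfl

lemma Circ.eq_of_subset (h : Circ M C) (h2 : Circ M D) (hss : D ⊆ C) : D = C :=
  hss.antisymm (h.2 h2.dep hss)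

lemma exists_circ_subset [Fintype α] (hD : M.Dep D) : ∃ C, C ⊆ D ∧ Circ M C := by
  obtain ⟨C, hC, hmin⟩ := Set.Finite.exists_minimal (s := {X | M.Dep X ∧ X ⊆ D})
    (Set.toFinite _) ⟨D, hD, Subset.rfl⟩
  refine ⟨C, hC.2, hC.1, fun Y hY hYC => ?_⟩
  have h := hmin (y := Y) ⟨hY, hYC.trans hC.2⟩ hYC
  exact h

lemma Circ.mem_closure_diff (h : Circ M C) (hx : x ∈ C) : x ∈ M.closure (C \ {x}) := by
  have hI := h.diff_indep hx
  have hd : M.Dep (insert x (C \ {x})) := by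
    rw [insert_diff_singleton, insert_eq_of_mem hx]; exact h.dep
  rw [hI.insert_dep_iff] at hd
  exact hd.1

/-- weak circuit elimination -/
lemma circ_elim [Fintype α] (h1 : Circ M C) (h2 : Circ M D) (hne : C ≠ D) (hx : x ∈ C ∩ D) :
    M.Dep ((C ∪ D) \ {x}) := by
  have hCD : ¬ C ⊆ D := fun hss => hne (h2.eq_of_subset h1 hss)
  obtain ⟨f, hfC, hfD⟩ := not_subset.1 hCD
  have hfx : f ≠ x := fun h => hfD (h ▸ hx.2)
  rw [← not_indep_iff (diff_subset.trans (union_subset h1.subset_ground h2.subset_ground))]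
  intro hIndep
  set A := (C ∪ D) \ {x, f} with hA
  have hAss : A ⊆ (C ∪ D) \ {x} := by
    intro a ha; simp only [hA, mem_diff, mem_insert_iff, mem_singleton_iff] at *; tauto
  have hAI : M.Indep A := hIndep.subset hAss
  have hxA : x ∈ M.closure A := by
    refine mem_of_mem_of_subset (h2.mem_closure_diff hx.2) (M.closure_subset_closure ?_)
    rintro a ⟨haD, hax⟩
    refine ⟨Or.inr haD, fun h => ?_⟩
    simp only [mem_insert_iff, mem_singleton_iff] at h hax
    rcases h with rfl | rfl
    exacts [hax rfl, hfD haD]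
  have hfA : f ∈ M.closure A := by
    have h1' : f ∈ M.closure (insert x A) := by
      refine mem_of_mem_of_subset (h1.mem_closure_diff hfC) (M.closure_subset_closure ?_)
      intro a ha
      simp only [mem_diff, mem_insert_iff, mem_singleton_iff, mem_union, hA] at *
      tauto
    rwa [← closure_insert_closure_eq_closure_insert, insert_eq_of_mem hxA,
      M.closure_closure] at h1'
  have hfA' : f ∉ A := fun h => h.2 (by simp)
  have hd : M.Dep (insert f A) := hAI.insert_dep_iff.2 ⟨hfA, hfA'⟩
  have hset : insert f A = (C ∪ D) \ {x} := by
    ext a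
    simp only [hA, mem_insert_iff, mem_diff, mem_union, mem_singleton_iff]
    constructor
    · rintro (rfl | ⟨h1', h2'⟩); exact ⟨Or.inl hfC, hfx⟩; exact ⟨h1', fun h => h2' (Or.inl h)⟩
    · rintro ⟨h1', h2'⟩; rcases eq_or_ne a f with rfl | haf; exact Or.inl rfl
      exact Or.inr ⟨h1', by tauto⟩
  rw [hset] at hd
  exact hd.not_indep hIndep

lemma circ_cocirc_ne_singleton (hC : Circ M C) (hD : Circ M✶ D) (hx : C ∩ D = {x}) :
    False := by
  have hxC : x ∈ C := (hx.symm.subset rfl).1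
  have hxD : x ∈ D := (hx.symm.subset rfl).2
  have hDE : D ⊆ M.E := by simpa using hD.subset_ground
  have hxE : x ∈ M.E := hDE hxD
  have hspan : M.Spanning (M.E \ (D \ {x})) := by
    rw [← coindep_iff_compl_spanning]
    exact (hD.diff_indep hxD : M✶.Indep (D \ {x}))
  have hnspan : ¬ M.Spanning (M.E \ D) := by
    rw [← coindep_iff_compl_spanning]
    exact fun h => hD.dep.not_indep h
  have hset : M.E \ (D \ {x}) = insert x (M.E \ D) := by
    ext a; simp only [mem_diff, mem_insert_iff, mem_singleton_iff]
    constructor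
    · rintro ⟨h1, h2⟩; by_cases h : a = x; exact Or.inl h; exact Or.inr ⟨h1, fun hD' => h2 ⟨hD', h⟩⟩
    · rintro (rfl | ⟨h1, h2⟩); exact ⟨hxE, fun h => h.2 rfl⟩; exact ⟨h1, fun h => h2 h.1⟩
  rw [hset] at hspan
  have hxcl : x ∈ M.closure (M.E \ D) := by
    refine mem_of_mem_of_subset (hC.mem_closure_diff hxC) (M.closure_subset_closure ?_)
    rintro a ⟨haC, hax⟩
    exact ⟨hC.subset_ground haC, fun haD => hax (by rw [← hx]; exact ⟨haC, haD⟩)⟩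
  have : M.closure (insert x (M.E \ D)) = M.closure (M.E \ D) := by
    rw [← closure_insert_closure_eq_closure_insert, insert_eq_of_mem hxcl, M.closure_closure]
  rw [spanning_iff_closure_eq] at hspan hnspan
  exact hnspan (by rw [← this, hspan])

lemma circ_cocirc_second (hC : Circ M C) (hD : Circ M✶ D) (hx : x ∈ C ∩ D) :
    ∃ y, y ∈ C ∩ D ∧ y ≠ x := by
  by_contra h
  push_neg at h
  exact circ_cocirc_ne_singleton hC hD
    ((subset_singleton_iff.2 fun y hy => h y hy).antisymm (singleton_subset_iff.2 hx))

lemma exists_fundCirc [Fintype α] (hB : M.IsBase B) (he : e ∈ M.E \ B) :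
    ∃ C, Circ M C ∧ C ⊆ insert e B ∧ e ∈ C := by
  obtain ⟨C, hss, hC⟩ := exists_circ_subset (hB.insert_dep he)
  refine ⟨C, hC, hss, by_contra fun heC => ?_⟩
  exact hC.dep.not_indep (hB.indep.subset fun a ha =>
    ((hss ha).resolve_left (fun h => heC (h ▸ ha))))

lemma fundCirc_unique [Fintype α] (hB : M.IsBase B) (he : e ∈ M.E \ B)
    (hC1 : Circ M C) (h1 : C ⊆ insert e B) (hC2 : Circ M D) (h2 : D ⊆ insert e B) : C = D := by
  have heC : e ∈ C := by_contra fun heC => hC1.dep.not_indep (hB.indep.subset fun a ha =>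
    ((h1 ha).resolve_left (fun h => heC (h ▸ ha))))
  have heD : e ∈ D := by_contra fun heD => hC2.dep.not_indep (hB.indep.subset fun a ha =>
    ((h2 ha).resolve_left (fun h => heD (h ▸ ha))))
  by_contra hne
  refine (circ_elim hC1 hC2 hne ⟨heC, heD⟩).not_indep (hB.indep.subset ?_)
  rintro a ⟨ha, hae⟩
  rcases ha with h | h
  · exact (h1 h).resolve_left (by simpa using hae)
  · exact (h2 h).resolve_left (by simpa using hae)

lemma fund_duality [Fintype α] (hC : Circ M C) (hCss : C ⊆ insert e B) (heC : e ∈ C)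
    (heB : e ∉ B) (hD : Circ M✶ D) (hDss : D ⊆ insert b (M.E \ B)) (hbD : b ∈ D)
    (hbB : b ∈ B) : b ∈ C ↔ e ∈ D := by
  have hbe : b ≠ e := fun h => heB (h ▸ hbB)
  constructor
  · intro hbC
    obtain ⟨z, hz, hzb⟩ := circ_cocirc_second hC hD ⟨hbC, hbD⟩
    have hze : z = e := by
      rcases hCss hz.1 with h | h; exact h
      rcases hDss hz.2 with h' | h'; exact absurd h' hzb; exact absurd h h'.2
    exact hze ▸ hz.2
  · intro heD
    obtain ⟨z, hz, hze⟩ := circ_cocirc_second hC hD ⟨heC, heD⟩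
    have hzb : z = b := by
      rcases hDss hz.2 with h | h; exact h
      rcases hCss hz.1 with h' | h'; exact absurd h' hze; exact absurd h' h.2
    exact hzb ▸ hz.1

lemma base_exchange_of_circ [Fintype α] (hB : M.IsBase B) (he : e ∈ M.E \ B) (hC : Circ M C)
    (hss : C ⊆ insert e B) (hc : c ∈ C) (hce : c ≠ e) : M.IsBase (insert e (B \ {c})) := by
  have hcB : c ∈ B := (hss hc).resolve_left hce
  have hIndep : M.Indep (insert e (B \ {c})) := by
    rw [← not_dep_iff (insert_subset he.1 (diff_subset.trans hB.subset_ground))]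
    intro hdep
    obtain ⟨C', hss', hC'⟩ := exists_circ_subset hdep
    have : C' = C := fundCirc_unique hB he hC'
      (hss'.trans (insert_subset_insert diff_subset)) hC hss
    have hcC' : c ∈ C' := this.symm ▸ hc
    rcases hss' hcC' with h | h
    exacts [hce h, h.2 rfl]
  exact hB.exchange_isBase_of_indep (fun h => he.2 h) hIndep

lemma base_exchange_of_cocirc [Fintype α] (hB : M.IsBase B) (hd : d ∈ B) (hD : Circ M✶ D)
    (hss : D ⊆ insert d (M.E \ B)) (hf : f ∈ D) (hfd : f ≠ d) :
    M.IsBase (insert f (B \ {d})) := by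
  have hdE : d ∈ M.E := hB.subset_ground hd
  have hfEB : f ∈ M.E \ B := (hss hf).resolve_left hfd
  have hd' : d ∈ M✶.E \ (M.E \ B) := by
    rw [dual_ground]; exact ⟨hdE, fun h => h.2 hd⟩
  have hbase := base_exchange_of_circ (M := M✶) hB.compl_isBase_dual hd' hD hss hf hfd
  have hB'E : insert d ((M.E \ B) \ {f}) ⊆ M.E := insert_subset hdE (diff_subset.trans diff_subset)
  have := (dual_isBase_iff hB'E).1 hbase
  have hset : M.E \ insert d ((M.E \ B) \ {f}) = insert f (B \ {d}) := by
    ext a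
    simp only [mem_diff, mem_insert_iff, mem_singleton_iff]
    constructor
    · rintro ⟨haE, h2⟩
      push_neg at h2
      by_cases haB : a ∈ B
      · exact Or.inr ⟨haB, h2.1⟩
      · exact Or.inl (h2.2 ⟨haE, haB⟩)
    · rintro (rfl | ⟨haB, had⟩)
      · exact ⟨hfEB.1, by simp [hfd]⟩
      · exact ⟨hB.subset_ground haB, by simp [had, haB]⟩
  rwa [hset] at this

lemma mem_dual_ground_diff (hB : M.IsBase B) (hb : b ∈ B) : b ∈ M✶.E \ (M.E \ B) := by
  rw [dual_ground]
  exact ⟨hB.subset_ground hb, fun h => h.2 hb⟩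

/-- every element of a circuit through the base lies on a fundamental circuit -/
lemma exists_fund_through [Fintype α] (hB : M.IsBase B) (hD : Circ M D) (hyD : y ∈ D)
    (hyB : y ∈ B) : ∃ x C, x ∈ D ∧ x ∉ B ∧ Circ M C ∧ C ⊆ insert x B ∧ x ∈ C ∧ y ∈ C := by
  by_contra hcon
  push_neg at hcon
  have hcl : D \ {y} ⊆ M.closure (B \ {y}) := by
    rintro w ⟨hwD, hwy⟩
    rw [mem_singleton_iff] at hwy
    by_cases hwB : w ∈ B
    · exact M.subset_closure (B \ {y}) (diff_subset.trans hB.subset_ground) ⟨hwB, hwy⟩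
    · obtain ⟨C, hC, hss, hwC⟩ := exists_fundCirc hB ⟨hD.subset_ground hwD, hwB⟩
      have hyC : y ∉ C := hcon w C hwD hwB hC hss hwC
      refine mem_of_mem_of_subset (hC.mem_closure_diff hwC) (M.closure_subset_closure ?_)
      rintro a ⟨haC, haw⟩
      rw [mem_singleton_iff] at haw
      exact ⟨(hss haC).resolve_left haw, fun h => hyC (h ▸ haC)⟩
  have hy : y ∈ M.closure (B \ {y}) :=
    closure_subset_closure_of_subset_closure hcl (hD.mem_closure_diff hyD)
  exact hB.indep.notMem_closure_sdiff_of_mem hyB hy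

lemma intAct_min [Fintype α] [LinearOrder α] (hB : M.IsBase B) (hb : IntAct M B b)
    (hD : Circ M✶ D) (hss : D ⊆ insert b (M.E \ B)) (hbD : b ∈ D) : IsMinOf b D := by
  obtain ⟨hbB, D0, hD0, hss0, hmin0⟩ := hb
  have : D0 = D := fundCirc_unique (M := M✶) hB.compl_isBase_dual
    (mem_dual_ground_diff hB hbB) hD0 hss0 hD hss
  exact this ▸ hmin0

lemma extAct_min [Fintype α] [LinearOrder α] (hB : M.IsBase B) (he : ExtAct M B e)
    (hC : Circ M C) (hss : C ⊆ insert e B) : IsMinOf e C := by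
  obtain ⟨heEB, C0, hC0, hss0, hmin0⟩ := he
  exact (fundCirc_unique hB heEB hC0 hss0 hC hss) ▸ hmin0

lemma extAct_not_mem_cocirc [Fintype α] [LinearOrder α] (hB : M.IsBase B) (he : ExtAct M B e)
    (hD : Circ M✶ D) (hss : D ⊆ insert b (M.E \ B)) (hbD : b ∈ D) (hbB : b ∈ B)
    (hmin : IsMinOf b D) : e ∉ D := by
  intro heD
  obtain ⟨⟨heE, heB⟩, C, hC, hssC, hminC⟩ := he
  have hdual := fund_duality hC hssC hminC.1 heB hD hss hbD hbB
  have hbC : b ∈ C := hdual.2 heD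
  have h1 : e ≤ b := hminC.2 b hbC
  have h2 : b ≤ e := hmin.2 e heD
  exact heB ((le_antisymm h1 h2) ▸ hbB)

lemma intAct_not_mem_circ [Fintype α] [LinearOrder α] (hB : M.IsBase B) (hb : IntAct M B b)
    (hC : Circ M C) (hss : C ⊆ insert e B) (heC : e ∈ C) (heB : e ∉ B)
    (hmin : IsMinOf e C) : b ∉ C := by
  intro hbC
  obtain ⟨hbB, D, hD, hssD, hminD⟩ := hb
  have hdual := fund_duality hC hss heC heB hD hssD hminD.1 hbB
  have heD : e ∈ D := hdual.1 hbC
  have h1 : e ≤ b := hmin.2 b hbC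
  have h2 : b ≤ e := hminD.2 e heD
  exact heB ((le_antisymm h2 h1) ▸ hbB)

/-! greedy weights -/

noncomputable def kwt [Fintype α] [LinearOrder α] (X : Set α) (e : α) : ℕ :=
  if e ∈ X then Fintype.card α + (X ∩ Iio e).ncard else (Xᶜ ∩ Ioi e).ncard

lemma kwt_lt_mem [Fintype α] [LinearOrder α] (ha : a ∈ X) (hb : b ∈ X) (hab : a < b) :
    kwt X a < kwt X b := by
  rw [kwt, kwt, if_pos ha, if_pos hb]
  have hss : X ∩ Iio a ⊂ X ∩ Iio b :=
    ⟨inter_subset_inter_right X (fun z (hz : z < a) => hz.trans hab),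
      fun h => absurd ((h ⟨ha, hab⟩).2 : a < a) (lt_irrefl a)⟩
  exact Nat.add_lt_add_left (Set.ncard_lt_ncard hss (Set.toFinite _)) _

lemma kwt_lt_not_mem [Fintype α] [LinearOrder α] (ha : a ∉ X) (hb : b ∉ X) (hab : b < a) :
    kwt X a < kwt X b := by
  rw [kwt, kwt, if_neg ha, if_neg hb]
  have hss : Xᶜ ∩ Ioi a ⊂ Xᶜ ∩ Ioi b :=
    ⟨inter_subset_inter_right _ (fun z (hz : a < z) => hab.trans hz),
      fun h => absurd ((h ⟨ha, hab⟩).2 : a < a) (lt_irrefl a)⟩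
  exact Set.ncard_lt_ncard hss (Set.toFinite _)

lemma kwt_cross [Fintype α] [LinearOrder α] (ha : a ∉ X) (hb : b ∈ X) :
    kwt X a < kwt X b := by
  rw [kwt, kwt, if_neg ha, if_pos hb]
  calc (Xᶜ ∩ Ioi a).ncard < Fintype.card α := by
        have h1 : Xᶜ ∩ Ioi a ⊂ univ := ssubset_univ_iff.2 (fun h => by
          have := h.symm.subset (mem_univ a); exact absurd this.2.out (lt_irrefl a))
        have := Set.ncard_lt_ncard h1 (Set.toFinite _)
        rwa [Set.ncard_univ, Nat.card_eq_fintype_card] at this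
    _ ≤ _ := Nat.le_add_right _ _

lemma kwt_le_analysis1 [Fintype α] [LinearOrder α] (he : e ∈ X) (hne : e ≠ c)
    (h : kwt X e ≤ kwt X c) : c ∈ X ∧ e < c := by
  by_cases hcX : c ∈ X
  · refine ⟨hcX, ?_⟩
    rcases lt_trichotomy e c with h' | h' | h'
    · exact h'
    · exact absurd h' hne
    · exact absurd h (not_le.2 (kwt_lt_mem hcX he h'))
  · exact absurd h (not_le.2 (kwt_cross hcX he))

lemma kwt_le_analysis2 [Fintype α] [LinearOrder α] (hb : b ∉ X) (hne : f ≠ b)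
    (h : kwt X f ≤ kwt X b) : f ∉ X ∧ b < f := by
  by_cases hfX : f ∈ X
  · exact absurd h (not_le.2 (kwt_cross hb hfX))
  · refine ⟨hfX, ?_⟩
    rcases lt_trichotomy b f with h' | h' | h'
    · exact h'
    · exact absurd h'.symm hne
    · exact absurd h (not_le.2 (kwt_lt_not_mem hb hfX h'))

noncomputable def wgt [Fintype α] [LinearOrder α] (X S : Set α) : ℕ :=
  ∑ e ∈ Finset.univ, if e ∈ S then 2 ^ (kwt X e) else 0

lemma wgt_split [Fintype α] [LinearOrder α] (hc : c ∈ S) :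
    wgt X S = wgt X (S \ {c}) + 2 ^ (kwt X c) := by
  have h2 : ∀ e : α, (if e ∈ S then 2 ^ (kwt X e) else 0) =
      (if e ∈ S \ {c} then 2 ^ (kwt X e) else 0) + (if e = c then 2 ^ (kwt X e) else 0) := by
    intro e
    rcases eq_or_ne e c with rfl | hec
    · rw [if_pos hc, if_neg (fun h => h.2 rfl), if_pos rfl, zero_add]
    · rw [if_neg hec, add_zero]
      by_cases heS : e ∈ S
      · rw [if_pos heS, if_pos ⟨heS, hec⟩]
      · rw [if_neg heS, if_neg (fun h => heS h.1)]
  rw [wgt, wgt, Finset.sum_congr rfl (fun e _ => h2 e), Finset.sum_add_distrib,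
    Finset.sum_ite_eq' Finset.univ c (fun e => 2 ^ (kwt X e)), if_pos (Finset.mem_univ c)]
  congr 1
  exact Finset.sum_congr rfl (fun e _ => by congr 1)

lemma wgt_diff_add [Fintype α] [LinearOrder α] (hc : c ∈ S) :
    wgt X S = wgt X (S \ {c}) + 2 ^ (kwt X c) := wgt_split hc

lemma wgt_insert [Fintype α] [LinearOrder α] (he : e ∉ S) :
    wgt X (insert e S) = wgt X S + 2 ^ (kwt X e) := by
  have h := wgt_split (X := X) (mem_insert e S)
  have hset : insert e S \ {e} = S := by
    rw [insert_diff_of_mem _ (rfl : e ∈ {e}), diff_singleton_eq_self he]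
  rwa [hset] at h

lemma exists_max_base [Fintype α] [LinearOrder α] (M : Matroid α) (X : Set α) :
    ∃ B0, M.IsBase B0 ∧ ∀ B', M.IsBase B' → wgt X B' ≤ wgt X B0 := by
  obtain ⟨B1, hB1⟩ := M.exists_isBase
  obtain ⟨B0, hB0, hmax⟩ := Finset.exists_max_image (Finset.univ.filter (M.IsBase ·))
    (wgt X) ⟨B1, by simpa using hB1⟩
  exact ⟨B0, by simpa using hB0, fun B' hB' => hmax B' (by simpa using hB')⟩

lemma greedy_ext [Fintype α] [LinearOrder α] {B0 : Set α} (hB0 : M.IsBase B0)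
    (hmax : ∀ B', M.IsBase B' → wgt X B' ≤ wgt X B0) (heX : e ∈ X) (heB : e ∉ B0)
    (heE : e ∈ M.E) : ExtAct M B0 e := by
  obtain ⟨C, hC, hss, heC⟩ := exists_fundCirc hB0 ⟨heE, heB⟩
  refine ⟨⟨heE, heB⟩, C, hC, hss, heC, fun c hc => ?_⟩
  rcases eq_or_ne c e with rfl | hce
  · exact le_refl _
  have hcB : c ∈ B0 := (hss hc).resolve_left hce
  have hbase := base_exchange_of_circ hB0 ⟨heE, heB⟩ hC hss hc hce
  have hle := hmax _ hbase
  rw [wgt_insert (fun h => heB h.1), wgt_diff_add hcB] at hle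
  have hkle : kwt X e ≤ kwt X c :=
    (Nat.pow_le_pow_iff_right (le_refl 2)).1 (Nat.le_of_add_le_add_left hle)
  exact le_of_lt (kwt_le_analysis1 heX (Ne.symm hce) hkle).2

lemma greedy_int [Fintype α] [LinearOrder α] {B0 : Set α} (hB0 : M.IsBase B0)
    (hmax : ∀ B', M.IsBase B' → wgt X B' ≤ wgt X B0) (hbB : b ∈ B0) (hbX : b ∉ X) :
    IntAct M B0 b := by
  obtain ⟨D, hD, hss, hbD⟩ := exists_fundCirc (M := M✶) hB0.compl_isBase_dual
    (mem_dual_ground_diff hB0 hbB)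
  refine ⟨hbB, D, hD, hss, hbD, fun f hf => ?_⟩
  rcases eq_or_ne f b with rfl | hfb
  · exact le_refl _
  have hfB : f ∈ M.E \ B0 := (hss hf).resolve_left hfb
  have hbase := base_exchange_of_cocirc hB0 hbB hD hss hf hfb
  have hle := hmax _ hbase
  rw [wgt_insert (fun h => hfB.2 h.1), wgt_diff_add hbB] at hle
  have hkle : kwt X f ≤ kwt X b :=
    (Nat.pow_le_pow_iff_right (le_refl 2)).1 (Nat.le_of_add_le_add_left hle)
  exact le_of_lt (kwt_le_analysis2 hbX hfb hkle).2

lemma cocirc_subset_ground (hD : Circ M✶ D) : D ⊆ M.E := by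
  have := Circ.subset_ground hD; rwa [dual_ground] at this

/-- Key exchange lemma: internal activity is preserved under exchanging a passive element
for the minimum of its fundamental cocircuit. -/
lemma intact_exchange [Fintype α] [LinearOrder α] (hB : M.IsBase B) (hd : d ∈ B)
    (hDd : Circ M✶ Dd) (hssd : Dd ⊆ insert d (M.E \ B)) (hdDd : d ∈ Dd)
    (hf0 : f0 ∈ Dd) (hf0min : IsMinOf f0 Dd) (hf0d : f0 ≠ d)
    (hb : IntAct M B b) (hbd : b ≠ d) :
    IntAct M (insert f0 (B \ {d})) b := by
  have hB2 : M.IsBase (insert f0 (B \ {d})) := base_exchange_of_cocirc hB hd hDd hssd hf0 hf0d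
  set B₂ := insert f0 (B \ {d}) with hB₂def
  have hbB : b ∈ B := hb.1
  have hbB2 : b ∈ B₂ := Or.inr ⟨hbB, hbd⟩
  have hf0EB : f0 ∈ M.E \ B := (hssd hf0).resolve_left hf0d
  have hf0lt : f0 < d := lt_of_le_of_ne (hf0min.2 d hdDd) hf0d
  have hbf0 : b ≠ f0 := fun h => hf0EB.2 (h ▸ hbB)
  have hdB2 : d ∉ B₂ := by
    rintro (h | h)
    exacts [hf0d h.symm, h.2 rfl]
  obtain ⟨D2, hD2, hss2, hbD2⟩ := exists_fundCirc (M := M✶) hB2.compl_isBase_dual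
    (mem_dual_ground_diff hB2 hbB2)
  obtain ⟨_, Db, hDb, hssb, hminb⟩ := hb
  refine ⟨hbB2, D2, hD2, hss2, hbD2, fun x hx => ?_⟩
  rcases eq_or_ne x b with rfl | hxb
  · exact le_refl _
  have hxEB2 : x ∈ M.E \ B₂ := (hss2 hx).resolve_left hxb
  have hxE : x ∈ M.E := hxEB2.1
  obtain ⟨Cx, hCx, hssCx, hxCx⟩ := exists_fundCirc hB2 hxEB2
  have hbCx : b ∈ Cx :=
    (fund_duality hCx hssCx hxCx (fun h => hxEB2.2 h) hD2 hss2 hbD2 hbB2).2 hx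
  by_cases hxd : x = d
  · subst hxd
    obtain ⟨Cf, hCf, hssCf, hf0Cf⟩ := exists_fundCirc hB hf0EB
    have hins : insert x B₂ ⊆ insert f0 B := by
      rintro a (rfl | (rfl | ⟨h1, _⟩))
      exacts [Or.inr hd, Or.inl rfl, Or.inr h1]
    have heq : Cx = Cf := fundCirc_unique hB hf0EB hCx (hssCx.trans hins) hCf hssCf
    have hbCf : b ∈ Cf := heq ▸ hbCx
    have hf0Db : f0 ∈ Db :=
      (fund_duality hCf hssCf hf0Cf hf0EB.2 hDb hssb hminb.1 hbB).1 hbCf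
    exact le_trans (hminb.2 f0 hf0Db) (le_of_lt hf0lt)
  · have hxB : x ∉ B := fun hxB' => hxEB2.2 (Or.inr ⟨hxB', hxd⟩)
    have hxf0 : x ≠ f0 := fun h => hxEB2.2 (Or.inl h)
    obtain ⟨CxB, hCxB, hssCxB, hxCxB⟩ := exists_fundCirc hB ⟨hxE, hxB⟩
    by_cases hdCxB : d ∈ CxB
    · -- f0 must lie in Cx
      have hf0Cx : f0 ∈ Cx := by
        by_contra hf0Cx
        have hssCx' : Cx ⊆ insert x B := by
          intro a ha
          rcases hssCx ha with rfl | (rfl | ⟨h1, _⟩)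
          exacts [Or.inl rfl, absurd ha hf0Cx, Or.inr h1]
        have heq : Cx = CxB := fundCirc_unique hB ⟨hxE, hxB⟩ hCx hssCx' hCxB hssCxB
        have hdCx : d ∈ Cx := heq.symm ▸ hdCxB
        rcases hssCx hdCx with h | h
        exacts [hxd h.symm, hdB2 h]
      obtain ⟨z, hz, hzf0⟩ := circ_cocirc_second hCx hDd ⟨hf0Cx, hf0⟩
      have hzx : z = x := by
        rcases hssd hz.2 with rfl | hzEB
        · exfalso
          rcases hssCx hz.1 with h | h
          exacts [hxd h.symm, hdB2 h]
        · rcases hssCx hz.1 with h | (h | ⟨h1, _⟩)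
          exacts [h, absurd h hzf0, absurd h1 hzEB.2]
      have hxDd : x ∈ Dd := hzx ▸ hz.2
      have hf0x : f0 ≤ x := hf0min.2 x hxDd
      obtain ⟨w, hw, hwb⟩ := circ_cocirc_second hCx hDb ⟨hbCx, hminb.1⟩
      have hwEB : w ∈ M.E \ B := (hssb hw.2).resolve_left hwb
      rcases hssCx hw.1 with h | (h | ⟨h1, _⟩)
      · exact h ▸ hminb.2 w hw.2
      · exact le_trans (h ▸ hminb.2 w hw.2 : b ≤ f0) hf0x
      · exact absurd h1 hwEB.2
    · have hssCxB2 : CxB ⊆ insert x B₂ := by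
        intro a ha
        rcases hssCxB ha with rfl | h
        · exact Or.inl rfl
        · exact Or.inr (Or.inr ⟨h, fun hac => hdCxB ((mem_singleton_iff.1 hac) ▸ ha)⟩)
      have heq : Cx = CxB := fundCirc_unique hB2 hxEB2 hCx hssCx hCxB hssCxB2
      have hbCxB : b ∈ CxB := heq ▸ hbCx
      have hxDb : x ∈ Db :=
        (fund_duality hCxB hssCxB hxCxB hxB hDb hssb hminb.1 hbB).1 hbCxB
      exact hminb.2 x hxDb

lemma no_bad_cocirc [Fintype α] [LinearOrder α] (hB : M.IsBase B) (hD : Circ M✶ D)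
    (hdmin : IsMinOf d D) (hdni : ¬ IntAct M B d)
    (hsub : ∀ b, b ∈ D → b ∈ B → b = d ∨ IntAct M B b) : False := by
  have hDE : D ⊆ M.E := cocirc_subset_ground hD
  have hdD := hdmin.1
  by_cases hdB : d ∈ B
  · obtain ⟨Dd, hDd, hssd, hdDd⟩ := exists_fundCirc (M := M✶) hB.compl_isBase_dual
      (mem_dual_ground_diff hB hdB)
    obtain ⟨f0, hf0Dd, hf0min⟩ := Set.exists_min_image Dd id (Set.toFinite Dd) ⟨d, hdDd⟩
    have hminf : IsMinOf f0 Dd := ⟨hf0Dd, hf0min⟩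
    have hf0d : f0 ≠ d := fun h => hdni ⟨hdB, Dd, hDd, hssd, h ▸ hminf⟩
    have hB2 : M.IsBase (insert f0 (B \ {d})) := base_exchange_of_cocirc hB hdB hDd hssd hf0Dd hf0d
    set B₂ := insert f0 (B \ {d}) with hB₂def
    have hf0EB : f0 ∈ M.E \ B := (hssd hf0Dd).resolve_left hf0d
    have hf0lt : f0 < d := lt_of_le_of_ne (hf0min d hdDd) hf0d
    have hdB2 : d ∉ B₂ := by rintro (h | h); exacts [hf0d h.symm, h.2 rfl]
    have hf0D : f0 ∉ D := fun h => absurd (hdmin.2 f0 h) (not_le.2 hf0lt)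
    obtain ⟨xx, Cx, hxD, hxnB, hCx, hssCx, hxCx, hdCx⟩ :=
      exists_fund_through (M := M✶) hB2.compl_isBase_dual hD hdD (⟨hDE hdD, hdB2⟩ : d ∈ M✶.E \ B₂)
    have hxB2 : xx ∈ B₂ := by
      by_contra h
      exact hxnB ⟨hDE hxD, h⟩
    have hxd : xx ≠ d := fun h => hdB2 (h ▸ hxB2)
    have hxB : xx ∈ B := by
      rcases hxB2 with rfl | h
      · exact absurd hxD hf0D
      · exact h.1
    have hIx : IntAct M B xx := (hsub xx hxD hxB).resolve_left hxd
    have hIx2 : IntAct M B₂ xx := intact_exchange hB hdB hDd hssd hdDd hf0Dd hminf hf0d hIx hxd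
    have hminx : IsMinOf xx Cx := intAct_min hB2 hIx2 hCx hssCx hxCx
    exact hxd (le_antisymm (hminx.2 d hdCx) (hdmin.2 xx hxD))
  · obtain ⟨xx, Cx, hxD, hxnB, hCx, hssCx, hxCx, hdCx⟩ :=
      exists_fund_through (M := M✶) hB.compl_isBase_dual hD hdD (⟨hDE hdD, hdB⟩ : d ∈ M✶.E \ B)
    have hxB : xx ∈ B := by
      by_contra h
      exact hxnB ⟨hDE hxD, h⟩
    have hxd : xx ≠ d := fun h => hdB (h ▸ hxB)
    have hIx : IntAct M B xx := (hsub xx hxD hxB).resolve_left hxd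
    have hminx : IsMinOf xx Cx := intAct_min hB hIx hCx hssCx hxCx
    exact hxd (le_antisymm (hminx.2 d hdCx) (hdmin.2 xx hxD))

section PhiPart
variable [Fintype α] [LinearOrder α]

def PhiB [LinearOrder α] (M : Matroid α) (B : Set α) : Set α :=
  (B \ IntSet M B) ∪ ExtSet M B

lemma intSet_subset_base : IntSet M B ⊆ B := fun _ h => h.1
lemma extSet_mem (h : a ∈ ExtSet M B) : a ∈ M.E ∧ a ∉ B := ⟨h.1.1, h.1.2⟩

lemma base_diff_phi : B \ PhiB M B = IntSet M B := by
  ext a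
  simp only [PhiB, mem_diff, mem_union, not_or]
  constructor
  · rintro ⟨haB, h1, _⟩
    by_contra haI
    exact h1 ⟨haB, haI⟩
  · intro haI
    exact ⟨haI.1, fun h => h.2 haI, fun h => (extSet_mem h).2 haI.1⟩

lemma phi_diff_base : PhiB M B \ B = ExtSet M B := by
  ext a
  simp only [PhiB, mem_diff, mem_union]
  constructor
  · rintro ⟨h1 | h1, haB⟩
    · exact absurd h1.1 haB
    · exact h1
  · intro h
    exact ⟨Or.inr h, (extSet_mem h).2⟩

lemma phi_subset_ground (hB : M.IsBase B) : PhiB M B ⊆ M.E := by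
  rintro a (h | h)
  exacts [hB.subset_ground h.1, (extSet_mem h).1]

lemma compat_phi (hB : M.IsBase B) : Compat M✶ (PhiB M B) := by
  rintro ⟨D, d, hD, hdmin, hXD⟩
  have hdX : d ∈ PhiB M B := (hXD.symm.subset rfl).1
  have hdni : ¬ IntAct M B d := by
    intro hint
    have hd' : d ∈ B \ PhiB M B := by rw [base_diff_phi]; exact hint
    exact hd'.2 hdX
  refine no_bad_cocirc hB hD hdmin hdni (fun b hbD hbB => ?_)
  rcases eq_or_ne b d with rfl | hbd
  · exact Or.inl rfl
  right
  have hbX : b ∉ PhiB M B := fun hbX => hbd (hXD.subset ⟨hbX, hbD⟩)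
  have : b ∈ B \ PhiB M B := ⟨hbB, hbX⟩
  rw [base_diff_phi] at this
  exact this

lemma extSet_dual (hB : M.IsBase B) : IntSet M✶ (M.E \ B) = ExtSet M B := by
  ext e
  show IntAct M✶ (M.E \ B) e ↔ ExtAct M B e
  unfold IntAct ExtAct
  rw [dual_dual, dual_ground, diff_diff_cancel_left hB.subset_ground]

lemma intSet_dual (hB : M.IsBase B) : ExtSet M✶ (M.E \ B) = IntSet M B := by
  ext b
  show ExtAct M✶ (M.E \ B) b ↔ IntAct M B b
  unfold IntAct ExtAct
  rw [dual_ground, diff_diff_cancel_left hB.subset_ground]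

lemma phi_dual (hB : M.IsBase B) : PhiB M✶ (M.E \ B) = M.E \ PhiB M B := by
  have hgr : M✶.E = M.E := dual_ground
  rw [PhiB, extSet_dual hB, intSet_dual hB]
  ext a
  simp only [mem_union, mem_diff, PhiB]
  constructor
  · rintro (⟨⟨haE, haB⟩, haEa⟩ | haI)
    · refine ⟨haE, ?_⟩
      rintro (h | h)
      exacts [haB h.1, haEa h]
    · refine ⟨hB.subset_ground haI.1, ?_⟩
      rintro (h | h)
      exacts [h.2 haI, (extSet_mem h).2 haI.1]
  · rintro ⟨haE, hna⟩
    by_cases haB : a ∈ B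
    · refine Or.inr ?_
      by_contra haI
      exact hna (Or.inl ⟨haB, haI⟩)
    · exact Or.inl ⟨⟨haE, haB⟩, fun h => hna (Or.inr h)⟩

lemma compat_phi_compl (hB : M.IsBase B) : Compat M (M.E \ PhiB M B) := by
  have h := compat_phi (M := M✶) hB.compl_isBase_dual
  rw [dual_dual] at h
  rwa [phi_dual hB] at h

lemma rkN_base {B0 : Set α} (hB0 : M.IsBase B0) : rkN M = B0.ncard := by
  have himg : Set.ncard '' {B | M.IsBase B} = {B0.ncard} := by
    ext n
    simp only [mem_image, mem_setOf_eq, mem_singleton_iff]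
    constructor
    · rintro ⟨B', hB', rfl⟩
      rw [Set.ncard_def, Set.ncard_def, hB'.encard_eq_encard_of_isBase hB0]
    · rintro rfl
      exact ⟨B0, hB0, rfl⟩
  rw [rkN, himg, csSup_singleton]

lemma mcon_base_int (hB : M.IsBase B) : (mcon M (PhiB M B)).IsBase (IntSet M B) := by
  set X := PhiB M B with hX
  set I := IntSet M B with hI
  set Ea := ExtSet M B with hEa
  have hIEX : I ⊆ M.E \ X := by
    intro a ha
    have : a ∈ B \ X := by rw [hI, ← base_diff_phi] at ha; exact ha
    exact ⟨hB.subset_ground this.1, this.2⟩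
  have hXE : M✶.E \ X = M.E \ X := by rw [dual_ground]
  have hset : (M.E \ X) \ I = (M.E \ B) \ Ea := by
    ext a
    simp only [mem_diff]
    constructor
    · rintro ⟨⟨haE, haX⟩, haI⟩
      have haB : a ∉ B := by
        intro haB
        have : a ∈ B \ X := ⟨haB, haX⟩
        rw [base_diff_phi] at this
        exact haI this
      exact ⟨⟨haE, haB⟩, fun h => haX (Or.inr h)⟩
    · rintro ⟨⟨haE, haB⟩, haEa⟩
      refine ⟨⟨haE, ?_⟩, fun h => haB (intSet_subset_base h)⟩
      rintro (h | h)
      exacts [haB h.1, haEa h]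
  have hbasis : M✶.IsBasis ((M.E \ X) \ I) (M.E \ X) := by
    rw [hset]
    refine Indep.isBasis_of_subset_of_subset_closure
      (hB.compl_isBase_dual.indep.subset diff_subset) ?_ ?_
    · rw [← hset]; exact diff_subset
    · intro a ⟨haE, haX⟩
      by_cases haB : a ∈ B
      · have haI : IntAct M B a := by
          have : a ∈ B \ X := ⟨haB, haX⟩
          rw [base_diff_phi] at this
          exact this
        obtain ⟨_, Da, hDa, hssa, hmina⟩ := haI
        refine mem_of_mem_of_subset (hDa.mem_closure_diff hmina.1)
          (M✶.closure_subset_closure ?_)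
        rintro z ⟨hzDa, hza⟩
        rw [mem_singleton_iff] at hza
        refine ⟨(hssa hzDa).resolve_left hza, fun hzEa => ?_⟩
        exact extAct_not_mem_cocirc hB hzEa hDa hssa hmina.1 haB hmina hzDa
      · have : a ∈ (M.E \ B) \ Ea :=
          ⟨⟨haE, haB⟩, fun h => haX (Or.inr h)⟩
        refine mem_of_mem_of_subset this (M✶.subset_closure _ ?_)
        rw [dual_ground]
        exact diff_subset.trans diff_subset
  have hNbase : (M✶ ↾ (M✶.E \ X)).IsBase ((M.E \ X) \ I) := by
    rw [hXE, isBase_restrict_iff (show M.E \ X ⊆ M✶.E from by rw [dual_ground]; exact diff_subset)]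
    exact hbasis
  rw [mcon]
  have hIsub : I ⊆ (M✶ ↾ (M✶.E \ X)).E := by
    rw [restrict_ground_eq, hXE]
    exact hIEX
  rw [dual_isBase_iff hIsub]
  have : (M✶ ↾ (M✶.E \ X)).E \ I = (M.E \ X) \ I := by rw [restrict_ground_eq, hXE]
  rw [this]
  exact hNbase

lemma restrict_dual_base_ext (hB : M.IsBase B) : ((M ↾ PhiB M B)✶).IsBase (ExtSet M B) := by
  set X := PhiB M B with hX
  set I := IntSet M B with hI
  set Ea := ExtSet M B with hEa
  have hXE : X ⊆ M.E := phi_subset_ground hB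
  have hEaX : Ea ⊆ X := subset_union_right
  have hset : X \ Ea = B \ I := by
    ext a
    simp only [mem_diff]
    constructor
    · rintro ⟨haX, haEa⟩
      rcases haX with h | h
      exacts [h, absurd h haEa]
    · rintro ⟨haB, haI⟩
      exact ⟨Or.inl ⟨haB, haI⟩, fun h => (extSet_mem h).2 haB⟩
  have hbasis : M.IsBasis (B \ I) X := by
    refine Indep.isBasis_of_subset_of_subset_closure (hB.indep.subset diff_subset)
      (subset_union_left) ?_
    rintro a (haBI | haEa)
    · exact M.subset_closure (B \ I) (diff_subset.trans hB.subset_ground) haBI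
    · obtain ⟨⟨haE, haB⟩, Ca, hCa, hssa, hmina⟩ := haEa
      refine mem_of_mem_of_subset (hCa.mem_closure_diff hmina.1)
        (M.closure_subset_closure ?_)
      rintro z ⟨hzCa, hza⟩
      rw [mem_singleton_iff] at hza
      refine ⟨(hssa hzCa).resolve_left hza, fun hzI => ?_⟩
      exact intAct_not_mem_circ hB hzI hCa hssa hmina.1 haB hmina hzCa
  have hEasub : Ea ⊆ (M ↾ X).E := by rw [restrict_ground_eq]; exact hEaX
  rw [dual_isBase_iff hEasub]
  have : (M ↾ X).E \ Ea = X \ Ea := by rw [restrict_ground_eq]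
  rw [this, hset, isBase_restrict_iff hXE]
  exact hbasis

end PhiPart

section Final
variable [Fintype α] [LinearOrder α]

lemma phi_inj_aux (hB1 : M.IsBase B1) (hB2 : M.IsBase B2) (hphi : PhiB M B1 = PhiB M B2)
    (he : e ∈ B1 \ B2) (hemin : ∀ g, g ∈ (B1 \ B2) ∪ (B2 \ B1) → e ≤ g) : False := by
  have heE : e ∈ M.E := hB1.subset_ground he.1
  obtain ⟨Ce, hCe, hssCe, heCe⟩ := exists_fundCirc hB2 ⟨heE, he.2⟩
  obtain ⟨De, hDe, hssDe, heDe⟩ := exists_fundCirc (M := M✶) hB1.compl_isBase_dual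
    (mem_dual_ground_diff hB1 he.1)
  obtain ⟨c, hc, hce⟩ := circ_cocirc_second hCe hDe ⟨heCe, heDe⟩
  have hcB2 : c ∈ B2 := (hssCe hc.1).resolve_left hce
  have hcB1 : c ∉ B1 := fun h => ((hssDe hc.2).resolve_left hce).2 h
  have helt : e < c := lt_of_le_of_ne (hemin c (Or.inr ⟨hcB2, hcB1⟩)) (Ne.symm hce)
  by_cases hcX : c ∈ PhiB M B1
  · -- c ∈ PhiB B1 \ B1 = ExtSet B1
    have hcEa : c ∈ ExtSet M B1 := by rw [← phi_diff_base]; exact ⟨hcX, hcB1⟩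
    obtain ⟨⟨hcE, _⟩, Cc, hCc, hssCc, hminc⟩ := hcEa
    have heCc : e ∈ Cc :=
      (fund_duality hCc hssCc hminc.1 hcB1 hDe hssDe heDe he.1).2 hc.2
    exact absurd (hminc.2 e heCc) (not_le.2 helt)
  · -- c ∈ B2 \ PhiB B2 = IntSet B2
    have hcI : c ∈ IntSet M B2 := by
      rw [← base_diff_phi]
      exact ⟨hcB2, fun h => hcX (hphi ▸ h)⟩
    obtain ⟨_, Dc, hDc, hssDc, hminDc⟩ := hcI
    have heDc : e ∈ Dc :=
      (fund_duality hCe hssCe heCe he.2 hDc hssDc hminDc.1 hcB2).1 hc.1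
    exact absurd (hminDc.2 e heDc) (not_le.2 helt)

lemma phi_inj (hB1 : M.IsBase B1) (hB2 : M.IsBase B2) (hphi : PhiB M B1 = PhiB M B2) :
    B1 = B2 := by
  by_contra hne
  have hnonempty : ((B1 \ B2) ∪ (B2 \ B1)).Nonempty := by
    by_contra h
    rw [Set.not_nonempty_iff_eq_empty, Set.union_empty_iff] at h
    exact hne (Set.Subset.antisymm (diff_eq_empty.1 h.1) (diff_eq_empty.1 h.2))
  obtain ⟨e, he, hemin⟩ := Set.exists_min_image _ id (Set.toFinite _) hnonempty
  rcases he with he | he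
  · exact phi_inj_aux hB1 hB2 hphi he hemin
  · refine phi_inj_aux hB2 hB1 hphi.symm he (fun g hg => hemin g ?_)
    rcases hg with h | h
    exacts [Or.inr h, Or.inl h]

lemma phi_surj (hXE : X ⊆ M.E) (hc1 : Compat M✶ X) (hc2 : Compat M (M.E \ X)) :
    ∃ B0, M.IsBase B0 ∧ PhiB M B0 = X := by
  obtain ⟨B0, hB0, hmax⟩ := exists_max_base M X
  refine ⟨B0, hB0, ?_⟩
  ext a
  constructor
  · rintro (⟨haB, haI⟩ | haEa)
    · -- a ∈ B0 \ IntSet: show a ∈ X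
      by_contra haX
      exact haI (greedy_int hB0 hmax haB haX)
    · -- a ∈ ExtSet: show a ∈ X
      by_contra haX
      obtain ⟨⟨haE, haB⟩, Ca, hCa, hssa, hmina⟩ := haEa
      refine hc2 ⟨Ca, a, hCa, hmina, ?_⟩
      apply Subset.antisymm
      · rintro z ⟨⟨hzE, hzX⟩, hzCa⟩
        rcases hssa hzCa with h | h
        · exact h
        · exfalso
          exact intAct_not_mem_circ hB0 (greedy_int hB0 hmax h hzX) hCa hssa
            hmina.1 haB hmina hzCa
      · rintro z rfl
        exact ⟨⟨haE, haX⟩, hmina.1⟩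
  · intro haX
    by_cases haB : a ∈ B0
    · -- show a ∉ IntSet
      left
      refine ⟨haB, fun haI => ?_⟩
      obtain ⟨_, Da, hDa, hssa, hmina⟩ := haI
      refine hc1 ⟨Da, a, hDa, hmina, ?_⟩
      apply Subset.antisymm
      · rintro z ⟨hzX, hzDa⟩
        rcases hssa hzDa with h | h
        · exact h
        · exfalso
          exact extAct_not_mem_cocirc hB0 (greedy_ext hB0 hmax hzX h.2 h.1) hDa hssa
            hmina.1 haB hmina hzDa
      · rintro z rfl
        exact ⟨haX, hmina.1⟩
    · exact Or.inr (greedy_ext hB0 hmax haX haB (hXE haX))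

end Final

/-- Kochol's compatible-sets expansion of the Tutte polynomial:
`T_M(x,y) = Σ_{X ∈ D(M,<)} x^{r(M/X)} y^{r*(M|X)}`. -/
theorem tutte_compatible_expansion [Fintype α] [LinearOrder α] (M : Matroid α)
    {R : Type*} [CommRing R] (x y : R) :
    ∑ B : Set α, (if M.IsBase B then
        x ^ (IntSet M B).ncard * y ^ (ExtSet M B).ncard else 0) =
    ∑ X : Set α, (if X ∈ DSet M M then
        x ^ rkN (mcon M X) * y ^ rkN ((M ↾ X)✶) else 0) := by
  rw [← Finset.sum_filter, ← Finset.sum_filter]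
  refine Finset.sum_bij (fun B _ => PhiB M B) ?_ ?_ ?_ ?_
  · intro B hB
    rw [Finset.mem_filter] at hB ⊢
    refine ⟨Finset.mem_univ _, phi_subset_ground hB.2, compat_phi hB.2, compat_phi_compl hB.2⟩
  · intro B1 h1 B2 h2 heq
    rw [Finset.mem_filter] at h1 h2
    exact phi_inj h1.2 h2.2 heq
  · intro X hX
    rw [Finset.mem_filter] at hX
    obtain ⟨hXE, hc1, hc2⟩ := hX.2
    obtain ⟨B0, hB0, hphi⟩ := phi_surj hXE hc1 hc2
    exact ⟨B0, Finset.mem_filter.2 ⟨Finset.mem_univ _, hB0⟩, hphi⟩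
  · intro B hB
    rw [Finset.mem_filter] at hB
    rw [rkN_base (mcon_base_int hB.2), rkN_base (restrict_dual_base_ext hB.2)]
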